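/- arXiv:1103.4512 — 4 statements merged into one kernel-verified Lean document; each statement's English description precedes it below -/
import Mathlib

section
/- Let κ > 0 and let h_B = h + κ p_0 on ℓ²(ℤ), where h is the discrete hopping operator (h f)(x) = (f(x-1)+f(x+1))/2 and p_0 = (δ_0, ·)δ_0. Then h_B has exactly one eigenvalue e with |e| > 1, namely e_B = √(1+κ²), it is simple, and a corresponding eigenfunction is f(x) = (κ + √(1+κ²))^{-|x|}. -/
open Filter Topology

lemma side_lemma (e ρ σ : ℂ) (hsum : ρ + σ = 2*e) (hprod : ρ*σ = 1)
    (hρ : ‖ρ‖ < 1) (hσ : 1 < ‖σ‖) (a : ℕ → ℂ)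
    (hrec : ∀ n : ℕ, a n + a (n+2) = 2*e*a (n+1))
    (hdecay : Tendsto a atTop (nhds 0)) : ∀ n, a n = a 0 * ρ^n := by
  have hne : σ - ρ ≠ 0 := by
    intro h
    rw [sub_eq_zero] at h
    rw [h] at hσ
    linarith
  set A : ℂ := (σ*a 0 - a 1)/(σ-ρ) with hA
  set B : ℂ := (a 1 - ρ*a 0)/(σ-ρ) with hB
  have hAB : ∀ n, a n = A*ρ^n + B*σ^n := by
    intro n
    induction n using Nat.strong_induction_on with
    | _ n ih =>
      match n with
      | 0 =>
        rw [hA, hB]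
        field_simp
        ring
      | 1 =>
        rw [hA, hB]
        field_simp
        ring
      | (m+2) =>
        have h0 := ih m (by omega)
        have h1 := ih (m+1) (by omega)
        calc a (m+2) = 2*e*a (m+1) - a m := by linear_combination hrec m
          _ = (ρ+σ)*(A*ρ^(m+1)+B*σ^(m+1)) - (A*ρ^m+B*σ^m) := by rw [h1, h0, hsum]
          _ = A*ρ^(m+2) + B*σ^(m+2) := by linear_combination (A*ρ^m + B*σ^m) * hprod
  have hB0 : B = 0 := by
    have htend : Tendsto (fun n => ‖a n - A*ρ^n‖) atTop (nhds 0) := by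
      have := (hdecay.sub ((tendsto_pow_atTop_nhds_zero_of_norm_lt_one hρ).const_mul A)).norm
      simpa using this
    have hle : ∀ n : ℕ, ‖B‖ ≤ ‖a n - A*ρ^n‖ := by
      intro n
      have : a n - A*ρ^n = B*σ^n := by rw [hAB n]; ring
      rw [this, norm_mul, norm_pow]
      calc ‖B‖ = ‖B‖ * 1 := by ring
        _ ≤ ‖B‖ * ‖σ‖^n := by
            apply mul_le_mul_of_nonneg_left _ (norm_nonneg _)
            exact one_le_pow₀ hσ.le
    have : ‖B‖ ≤ 0 := ge_of_tendsto' htend hle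
    simpa using norm_le_zero_iff.mp this
  have hA0 : A = a 0 := by have := hAB 0; simp [hB0] at this; simp [this]
  intro n
  rw [hAB n, hB0, hA0]
  ring

/-- decay of an ℓ² sequence along an injection of ℕ into ℤ -/
lemma decay_lemma (g : ℤ → ℂ) (hg : Summable (fun x : ℤ => ‖g x‖ ^ 2))
    (ι : ℕ → ℤ) (hι : Function.Injective ι) :
    Tendsto (fun n => g (ι n)) atTop (nhds 0) := by
  have h1 : Summable fun n : ℕ => ‖g (ι n)‖ ^ 2 := hg.comp_injective hι
  have h2 : Tendsto (fun n : ℕ => ‖g (ι n)‖ ^ 2) atTop (nhds 0) := h1.tendsto_atTop_zero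
  have h3 : Tendsto (fun n : ℕ => ‖g (ι n)‖) atTop (nhds 0) := by
    have := h2.sqrt
    simpa [Real.sqrt_sq (norm_nonneg _)] using this
  rw [tendsto_zero_iff_norm_tendsto_zero]
  exact h3

/-- For `κ > 0`, `h_B = h + κ p₀` on `ℓ²(ℤ)` has exactly one eigenvalue `e`
with `|e| > 1`, namely `e_B = √(1+κ²)`; it is simple, with eigenfunction
`f x = (κ + √(1+κ²))^{-|x|}`.  The operator acts as
`(h_B f)(x) = (f(x-1)+f(x+1))/2 + κ f(0) δ_{x,0}`. -/
theorem magnetic_eigenvalue (κ : ℝ) (hκ : 0 < κ) (f : ℤ → ℝ)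
    (hf : ∀ x : ℤ, f x = (κ + Real.sqrt (1 + κ ^ 2)) ^ (-(x.natAbs : ℤ))) :
    Summable (fun x : ℤ => (f x) ^ 2) ∧
    (∀ x : ℤ, (f (x - 1) + f (x + 1)) / 2 + κ * f 0 * (if x = 0 then 1 else 0)
        = Real.sqrt (1 + κ ^ 2) * f x) ∧
    (∀ (e : ℝ) (g : ℤ → ℂ), 1 < |e| →
      Summable (fun x : ℤ => ‖g x‖ ^ 2) → (∃ x, g x ≠ 0) →
      (∀ x : ℤ, (g (x - 1) + g (x + 1)) / 2
          + (κ : ℂ) * g 0 * (if x = 0 then 1 else 0) = (e : ℂ) * g x) →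
      e = Real.sqrt (1 + κ ^ 2) ∧ ∃ c : ℂ, ∀ x, g x = c * (f x : ℂ)) := by
  set s : ℝ := Real.sqrt (1 + κ ^ 2) with hs
  have hs2 : s ^ 2 = 1 + κ ^ 2 := Real.sq_sqrt (by positivity)
  have hs0 : 0 ≤ s := Real.sqrt_nonneg _
  have hs1 : 1 < s + κ := by nlinarith
  have hsκ : κ < s := by nlinarith
  set q : ℝ := s - κ with hq
  have hq0 : 0 < q := by simp [hq]; linarith
  have hq1 : q < 1 := by nlinarith
  have hrq : (κ + s) * q = 1 := by rw [hq]; nlinarith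
  have hfq : ∀ x : ℤ, f x = q ^ x.natAbs := by
    intro x
    rw [hf x]
    have hinv : q = (κ + s)⁻¹ := eq_inv_of_mul_eq_one_right hrq
    rw [zpow_neg, zpow_natCast, ← inv_pow, ← hinv]
  refine ⟨?_, ?_, ?_⟩
  · -- Summability
    have heq : ∀ x : ℤ, (f x) ^ 2 = (q ^ 2) ^ x.natAbs := by
      intro x; rw [hfq x, ← pow_mul, ← pow_mul, Nat.mul_comm]
    simp_rw [heq]
    have hgeo : Summable fun n : ℕ => (q ^ 2) ^ n :=
      summable_geometric_of_lt_one (by positivity) (by nlinarith)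
    apply Summable.of_nat_of_neg
    · simpa using hgeo
    · simpa using hgeo
  · -- Eigenvalue equation
    intro x
    have hkey : 1 + q^2 = 2 * s * q := by rw [hq]; linear_combination -hs2
    rcases lt_trichotomy x 0 with hx | hx | hx
    · obtain ⟨n, rfl⟩ : ∃ n : ℕ, x = -((n : ℤ) + 1) := ⟨(-x-1).toNat, by omega⟩
      rw [if_neg (by omega)]
      simp only [hfq]
      have e1 : (-((n:ℤ)+1) - 1).natAbs = n + 2 := by omega
      have e2 : (-((n:ℤ)+1) + 1).natAbs = n := by omega
      have e3 : (-((n:ℤ)+1)).natAbs = n + 1 := by omega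
      rw [e1, e2, e3]
      linear_combination (q^n/2) * hkey
    · subst hx
      rw [if_pos rfl]
      simp only [hfq]
      norm_num
      rw [hq]; ring
    · obtain ⟨n, rfl⟩ : ∃ n : ℕ, x = (n : ℤ) + 1 := ⟨(x-1).toNat, by omega⟩
      rw [if_neg (by omega)]
      simp only [hfq]
      have e1 : ((n:ℤ)+1 - 1).natAbs = n := by omega
      have e2 : ((n:ℤ)+1 + 1).natAbs = n + 2 := by omega
      have e3 : ((n:ℤ)+1).natAbs = n + 1 := by omega
      rw [e1, e2, e3]
      linear_combination (q^n/2) * hkey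
  · -- Uniqueness
    intro e g he hgsum hex hgrec
    have he2 : 1 < e^2 := by nlinarith [sq_abs e, abs_nonneg e]
    set t : ℝ := Real.sqrt (e^2 - 1) with ht
    have ht2 : t ^ 2 = e^2 - 1 := Real.sq_sqrt (by linarith)
    have ht0 : 0 < t := Real.sqrt_pos.mpr (by linarith)
    -- the small root ρ and large root σ of z² - 2ez + 1 = 0
    set ρ : ℝ := if 0 < e then e - t else e + t with hρdef
    set σ : ℝ := if 0 < e then e + t else e - t with hσdef
    have hsum : ρ + σ = 2 * e := by rw [hρdef, hσdef]; split <;> ring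
    have hprod : ρ * σ = 1 := by rw [hρdef, hσdef]; split <;> linear_combination -ht2
    have hρabs : |ρ| < 1 := by
      rcases lt_or_ge 0 e with h | h
      · rw [hρdef, if_pos h]
        rw [abs_of_pos h] at he
        have h2 : t < e := by nlinarith
        have h3 : e - t < 1 := by nlinarith
        rw [abs_of_pos (by linarith)]
        exact h3
      · rw [hρdef, if_neg (not_lt.mpr h)]
        rw [abs_of_nonpos h] at he
        have h2 : t < -e := by nlinarith
        have h3 : -1 < e + t := by nlinarith
        rw [abs_of_neg (by linarith)]
        linarith
    have hσabs : 1 < |σ| := by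
      have hprodabs : |ρ| * |σ| = 1 := by rw [← abs_mul, hprod, abs_one]
      nlinarith [abs_nonneg σ, abs_nonneg ρ]
    -- complex versions
    have hsumC : (ρ:ℂ) + (σ:ℂ) = 2 * (e:ℂ) := by exact_mod_cast congrArg (Complex.ofReal) hsum
    have hprodC : (ρ:ℂ) * (σ:ℂ) = 1 := by exact_mod_cast congrArg (Complex.ofReal) hprod
    have hρn : ‖(ρ:ℂ)‖ < 1 := by rwa [Complex.norm_real, Real.norm_eq_abs]
    have hσn : 1 < ‖(σ:ℂ)‖ := by rwa [Complex.norm_real, Real.norm_eq_abs]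
    -- positive side
    have hpos : ∀ n : ℕ, g n = g 0 * (ρ:ℂ)^n := by
      have hrecn : ∀ n : ℕ, g n + g ((n:ℕ)+2 : ℕ) = 2*(e:ℂ)*g ((n+1 : ℕ)) := by
        intro n
        have h := hgrec ((n:ℤ)+1)
        rw [if_neg (by omega)] at h
        have e1 : (n:ℤ)+1-1 = (n:ℤ) := by ring
        have e2 : (n:ℤ)+1+1 = (n:ℤ)+2 := by ring
        rw [e1, e2] at h
        push_cast
        linear_combination 2*h
      have hdec : Tendsto (fun n : ℕ => g n) atTop (nhds 0) :=
        decay_lemma g hgsum (fun n => (n:ℤ)) Nat.cast_injective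
      have := side_lemma (e:ℂ) (ρ:ℂ) (σ:ℂ) hsumC hprodC hρn hσn (fun n => g n) hrecn hdec
      intro n
      have hn := this n
      simpa using hn
    -- negative side
    have hneg : ∀ n : ℕ, g (-(n:ℤ)) = g 0 * (ρ:ℂ)^n := by
      have hrecn : ∀ n : ℕ, g (-(n:ℤ)) + g (-((n:ℤ)+2)) = 2*(e:ℂ)*g (-((n:ℤ)+1)) := by
        intro n
        have h := hgrec (-((n:ℤ)+1))
        rw [if_neg (by omega)] at h
        have e1 : -((n:ℤ)+1)-1 = -((n:ℤ)+2) := by ring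
        have e2 : -((n:ℤ)+1)+1 = -(n:ℤ) := by ring
        rw [e1, e2] at h
        linear_combination 2*h
      have hdec : Tendsto (fun n : ℕ => g (-(n:ℤ))) atTop (nhds 0) :=
        decay_lemma g hgsum (fun n => -(n:ℤ)) (fun a b h => by
          simp only [neg_inj] at h; exact_mod_cast h)
      have := side_lemma (e:ℂ) (ρ:ℂ) (σ:ℂ) hsumC hprodC hρn hσn
        (fun n => g (-(n:ℤ))) (by intro n; push_cast; exact hrecn n) hdec
      intro n
      have hn := this n
      simpa using hn
    have hall : ∀ x : ℤ, g x = g 0 * (ρ:ℂ)^x.natAbs := by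
      intro x
      rcases Int.natAbs_eq x with h | h
      · nth_rewrite 1 [h]; exact hpos _
      · nth_rewrite 1 [h]; exact hneg _
    have hg0 : g 0 ≠ 0 := by
      obtain ⟨x, hx⟩ := hex
      intro h0
      exact hx (by rw [hall x, h0, zero_mul])
    -- boundary condition at 0
    have hbC : (ρ:ℂ) + (κ:ℂ) = (e:ℂ) := by
      have hb := hgrec 0
      rw [if_pos rfl] at hb
      have h1 : g (0+1) = g 0 * (ρ:ℂ) := by
        rw [hall]; norm_num
      have hm1 : g (0-1) = g 0 * (ρ:ℂ) := by
        rw [hall]; norm_num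
      rw [h1, hm1] at hb
      have hz : ((ρ:ℂ) + (κ:ℂ) - (e:ℂ)) * g 0 = 0 := by linear_combination hb
      rcases mul_eq_zero.mp hz with h | h
      · linear_combination h
      · exact absurd h hg0
    have hb : ρ + κ = e := by exact_mod_cast hbC
    -- derive e² = 1 + κ²
    have heq2 : e^2 = 1 + κ^2 := by
      have hσval : σ = e + κ := by linarith [hsum, hb]
      have : (e - κ) * (e + κ) = 1 := by rw [← hσval]; rw [show e - κ = ρ by linarith]; exact hprod
      linear_combination this
    have hes : e = s := by
      have hfac : (e - s) * (e + s) = 0 := by linear_combination heq2 - hs2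
      rcases mul_eq_zero.mp hfac with h | h
      · linarith [sub_eq_zero.mp h]
      · exfalso
        have hes' : e = -s := by linarith
        have : ρ = -s - κ := by rw [← hb] at hes'; linarith
        rw [this] at hρabs
        rw [abs_of_neg (by linarith)] at hρabs
        linarith
    have hρq : ρ = q := by rw [hq]; linarith [hb, hes]
    refine ⟨hes, g 0, ?_⟩
    intro x
    rw [hall x, hfq x, hρq]
    push_cast
    ring
end

section
/- Let κ > 0, e_B = √(1+κ²), and λ_B = log(κ + e_B). Then for every integer x ≥ 0, e^{-λ_B x} = i e_B ∫_{-π}^{π} (dk/2π) · e^{-i k x} / (sin k + iκ). -/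
open Real Complex intervalIntegral MeasureTheory

private lemma norm_w (k : ℝ) : ‖Complex.exp (-(I*k))‖ = 1 := by
  rw [Complex.norm_exp]; simp

private lemma norm_z (k : ℝ) : ‖Complex.exp (I*k)‖ = 1 := by
  rw [Complex.norm_exp]; simp

private lemma one_sub_ne (r w : ℂ) (hr : ‖r‖ < 1) (hw : ‖w‖ = 1) : 1 - r * w ≠ 0 := by
  intro h
  have : ‖r * w‖ = 1 := by
    have : r * w = 1 := by linear_combination -h
    simp [this]
  rw [norm_mul, hw, mul_one] at this
  linarith

private lemma slit (r w : ℂ) (hr : ‖r‖ < 1) (hw : ‖w‖ = 1) : 1 - r * w ∈ Complex.slitPlane := by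
  rw [Complex.mem_slitPlane_iff]
  left
  have h1 : |(r*w).re| ≤ ‖r*w‖ := Complex.abs_re_le_norm _
  rw [norm_mul, hw, mul_one] at h1
  have : (1 - r*w).re = 1 - (r*w).re := by simp
  rw [this]
  cases abs_le.mp h1 with
  | intro a b => linarith

private lemma hD_ne (κ : ℝ) (hκ : κ ≠ 0) (k : ℝ) : Complex.sin k + I*κ ≠ 0 := by
  intro h
  rw [← Complex.ofReal_sin] at h
  have := congrArg Complex.im h
  simp at this
  exact hκ this

private lemma sin_wz (k : ℝ) : Complex.sin k =
    ((Complex.exp (-(I*k)) - Complex.exp (I*k)) * I) / 2 := by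
  rw [Complex.sin, show -(↑k)*I = -(I*(k:ℂ)) by ring, show (↑k)*I = I*(k:ℂ) by ring]

private lemma zw_one (k : ℝ) : Complex.exp (I*k) * Complex.exp (-(I*k)) = 1 := by
  rw [← Complex.exp_add]; simp

private lemma zero_int (r : ℂ) (hr : ‖r‖ < 1) (hr0 : r ≠ 0) (n : ℕ) :
    ∫ k in (-π)..π, Complex.exp (-(I*k)) ^ (n+1) / (1 - r * Complex.exp (-(I*k))) = 0 := by
  set G : ℂ → ℂ := fun z => (I / r^(n+1)) *
    (-(Complex.log (1 - r * Complex.exp (-(I*z)))) -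
      ∑ j ∈ Finset.range n, (r * Complex.exp (-(I*z)))^(j+1)/((j:ℂ)+1)) with hG
  have key : ∀ k : ℝ, HasDerivAt (fun t : ℝ => G t)
      (Complex.exp (-(I*k)) ^ (n+1) / (1 - r * Complex.exp (-(I*k)))) k := by
    intro k
    set w : ℂ := Complex.exp (-(I*(k:ℂ))) with hwdef
    have hwn : ‖w‖ = 1 := norm_w k
    have hne : 1 - r * w ≠ 0 := one_sub_ne r w hr hwn
    have hrw1 : r * w ≠ 1 := by
      intro h
      have : ‖r*w‖ = 1 := by rw [h]; simp
      rw [norm_mul, hwn, mul_one] at this; linarith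
    have h1 : HasDerivAt (fun z : ℂ => Complex.exp (-(I*z))) (-I * w) (k:ℂ) := by
      have := (Complex.hasDerivAt_exp (-(I*(k:ℂ)))).comp (k:ℂ)
        (((hasDerivAt_id (k:ℂ)).const_mul I).neg)
      simpa [hwdef, mul_comm, Function.comp_def] using this
    have h2 : HasDerivAt (fun z : ℂ => 1 - r * Complex.exp (-(I*z))) (I * r * w) (k:ℂ) := by
      have := ((h1.const_mul r).const_sub 1)
      rw [show I * r * w = -(r * (-I * w)) by ring]; exact this
    have h3 : HasDerivAt (fun z : ℂ => Complex.log (1 - r * Complex.exp (-(I*z))))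
        ((1 - r*w)⁻¹ * (I * r * w)) (k:ℂ) := by
      have := (Complex.hasDerivAt_log (slit r w hr hwn)).comp (k:ℂ) h2; exact this
    have h4 : HasDerivAt (fun z : ℂ => ∑ j ∈ Finset.range n,
        (r * Complex.exp (-(I*z)))^(j+1)/((j:ℂ)+1))
        (∑ j ∈ Finset.range n, ((j:ℂ)+1) * (r*w)^j * (r * (-I * w)) / ((j:ℂ)+1)) (k:ℂ) := by
      apply HasDerivAt.fun_sum
      intro j _
      exact ((h1.const_mul r).pow (j+1)).div_const _ |>.congr_deriv (by push_cast; ring)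
    have hGd : HasDerivAt G ((I / r^(n+1)) *
        (-((1 - r*w)⁻¹ * (I * r * w)) -
          ∑ j ∈ Finset.range n, ((j:ℂ)+1) * (r*w)^j * (r * (-I * w)) / ((j:ℂ)+1))) (k:ℂ) :=
      ((h3.neg.sub h4).const_mul _)
    have := hGd.comp_ofReal
    convert this using 1
    have hsum : ∑ j ∈ Finset.range n, ((j:ℂ)+1) * (r*w)^j * (r * (-I * w)) / ((j:ℂ)+1)
        = (r * (-I * w)) * ∑ j ∈ Finset.range n, (r*w)^j := by
      rw [Finset.mul_sum]
      apply Finset.sum_congr rfl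
      intro j _
      have hj : ((j:ℂ)+1) ≠ 0 := Nat.cast_add_one_ne_zero j
      field_simp
    rw [hsum, geom_sum_eq hrw1]
    have hrn : (r:ℂ)^(n+1) ≠ 0 := pow_ne_zero _ hr0
    have hrw1' : r*w - 1 ≠ 0 := sub_ne_zero.mpr hrw1
    field_simp
    ring_nf
    rw [Complex.I_sq]
    ring
  rw [intervalIntegral.integral_eq_sub_of_hasDerivAt (fun t _ => key t)]
  · have : Complex.exp (-(I*(π:ℂ))) = Complex.exp (-(I*((-π:ℝ):ℂ))) := by
      push_cast
      rw [show -(I*(π:ℂ)) = -(π*I) by ring, show -(I*(-π:ℂ)) = π*I by ring,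
        Complex.exp_neg, Complex.exp_pi_mul_I]
      norm_num
    simp [hG, this]
  · apply Continuous.intervalIntegrable
    apply Continuous.div
    · fun_prop
    · fun_prop
    · intro k
      exact one_sub_ne r _ hr (norm_w k)

private lemma zero_int' (r : ℂ) (hr : ‖r‖ < 1) (hr0 : r ≠ 0) (n : ℕ) :
    ∫ k in (-π)..π, Complex.exp (I*k) ^ (n+1) / (1 - r * Complex.exp (I*k)) = 0 := by
  have h2 := intervalIntegral.integral_comp_neg (a := -π) (b := π)
    (fun k : ℝ => Complex.exp (I*k) ^ (n+1) / (1 - r * Complex.exp (I*k)))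
  rw [neg_neg] at h2
  rw [← h2, ← zero_int r hr hr0 n]
  apply intervalIntegral.integral_congr
  intro t _
  have harg : (I * ((-t:ℝ):ℂ)) = -(I*(t:ℂ)) := by push_cast; ring
  simp only [harg]

private lemma combo (a b c u v s D : ℂ) (hu : u ≠ 0) (hv : v ≠ 0) (hs : s ≠ 0) (hD : D ≠ 0)
    (h : v*u*s = D*(a*v + b*u + c*u*v)) :
    1/D = a/(s*u) + (b/(s*v) + c/s) := by
  field_simp
  linear_combination h

private lemma combo2 (a b c v D : ℂ) (hv : v ≠ 0) (hD : D ≠ 0)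
    (h : (a - b)*v = c*D) : a/D = b/D + c/v := by
  field_simp
  linear_combination h

private lemma ID1 (κ e : ℝ) (hκ : 0 < κ) (he2 : e^2 = 1+κ^2) (he0 : 0 < e) (k : ℝ) :
    1/(Complex.sin k + I*κ) =
      (-I*((e-κ:ℝ):ℂ)/e) * (Complex.exp (I*k)^(0+1)/(1 - ((e-κ:ℝ):ℂ) * Complex.exp (I*k)))
      + ((I*((e-κ:ℝ):ℂ)/e) * (Complex.exp (-(I*k))^(0+1)/(1 - (-((e-κ:ℝ):ℂ)) * Complex.exp (-(I*k))))
      + (-(I/(e:ℂ)))) := by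
  have hb0 : 0 < e - κ := by nlinarith
  have hb1 : e - κ < 1 := by nlinarith
  set B : ℂ := ((e-κ:ℝ):ℂ) with hBdef
  set w : ℂ := Complex.exp (-(I*(k:ℂ))) with hwdef
  set z : ℂ := Complex.exp (I*(k:ℂ)) with hzdef
  have hBnorm : ‖B‖ < 1 := by
    rw [hBdef, Complex.norm_real]
    rw [Real.norm_eq_abs, abs_of_pos hb0]; exact hb1
  have hzw : z * w = 1 := zw_one k
  have hBrel : B^2 + 2*(κ:ℂ)*B = 1 := by
    have : (e-κ)^2 + 2*κ*(e-κ) = 1 := by nlinarith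
    rw [hBdef]
    exact_mod_cast this
  have hne1 : 1 - B*z ≠ 0 := one_sub_ne B z hBnorm (norm_z k)
  have hne2 : 1 - (-B)*w ≠ 0 := one_sub_ne (-B) w (by rwa [norm_neg]) (norm_w k)
  have hD : Complex.sin k + I*κ ≠ 0 := hD_ne κ hκ.ne' k
  have heC : (e:ℂ) ≠ 0 := by exact_mod_cast he0.ne'
  have heB : (e:ℂ) = B + κ := by rw [hBdef]; push_cast; ring
  have hI : (I:ℂ)^2 = -1 := Complex.I_sq
  rw [sin_wz k] at hD ⊢
  rw [← hwdef, ← hzdef] at hD ⊢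
  rw [heB]
  have hBκ : B + (κ:ℂ) ≠ 0 := heB ▸ heC
  simp only [zero_add, pow_one]
  rw [div_mul_div_comm, div_mul_div_comm, show -(I/(B+(κ:ℂ))) = (-I)/(B+(κ:ℂ)) by ring]
  exact combo (-I*B*z) (I*B*w) (-I) (1 - B*z) (1 - -B*w) (B+(κ:ℂ)) _ hne1 hne2 hBκ hD
    (by linear_combination (-(B^2*(B+(κ:ℂ))) - (w-z+2*(κ:ℂ))*B^2/2)*hzw
        + ((w-z)/2 - B)*hBrel
        + ((w-z+2*(κ:ℂ))*(B^2*z*w+1)/2)*hI)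

private lemma ID2 (κ e : ℝ) (hκ : 0 < κ) (he2 : e^2 = 1+κ^2) (he0 : 0 < e) (x : ℕ) (k : ℝ) :
    Complex.exp (-I*k*((x:ℂ)+1))/(Complex.sin k + I*κ)
      = ((e-κ:ℝ):ℂ) * (Complex.exp (-I*k*(x:ℂ))/(Complex.sin k + I*κ))
        + (-2*I*((e-κ:ℝ):ℂ)) *
            (Complex.exp (-(I*k))^(x+1)/(1 - (-((e-κ:ℝ):ℂ)) * Complex.exp (-(I*k)))) := by
  have hb0 : 0 < e - κ := by nlinarith
  have hb1 : e - κ < 1 := by nlinarith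
  set B : ℂ := ((e-κ:ℝ):ℂ) with hBdef
  set w : ℂ := Complex.exp (-(I*(k:ℂ))) with hwdef
  set z : ℂ := Complex.exp (I*(k:ℂ)) with hzdef
  set W : ℂ := Complex.exp (-I*(k:ℂ)*(x:ℂ)) with hWdef
  have hBnorm : ‖B‖ < 1 := by
    rw [hBdef, Complex.norm_real]
    rw [Real.norm_eq_abs, abs_of_pos hb0]; exact hb1
  have hzw : z * w = 1 := zw_one k
  have hBrel : B^2 + 2*(κ:ℂ)*B = 1 := by
    have : (e-κ)^2 + 2*κ*(e-κ) = 1 := by nlinarith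
    rw [hBdef]
    exact_mod_cast this
  have hne2 : 1 - (-B)*w ≠ 0 := one_sub_ne (-B) w (by rwa [norm_neg]) (norm_w k)
  have hD : Complex.sin k + I*κ ≠ 0 := hD_ne κ hκ.ne' k
  have hI : (I:ℂ)^2 = -1 := Complex.I_sq
  have hW1 : Complex.exp (-I*(k:ℂ)*((x:ℂ)+1)) = W * w := by
    rw [hWdef, hwdef, ← Complex.exp_add]
    congr 1
    ring
  have hwx : w^x = W := by
    rw [hwdef, hWdef, ← Complex.exp_nat_mul]
    congr 1
    ring
  rw [sin_wz k] at hD ⊢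
  rw [← hwdef, ← hzdef] at hD ⊢
  rw [hW1, pow_succ, hwx, mul_div_assoc' B W _, mul_div_assoc' _ (W*w) _]
  exact combo2 (W*w) (B*W) (-2*I*B*(W*w)) _ _ hne2 hD
    (by linear_combination (W*B)*hzw + (-(W*w))*hBrel + (W*B*w*(w-z+2*(κ:ℂ)))*hI)

/-- For `κ > 0`, `e_B = √(1+κ²)`, `λ_B = log(κ+e_B)`, and every integer
`x ≥ 0`: `e^{-λ_B x} = i e_B ∫_{-π}^{π} (dk/2π) e^{-ikx}/(sin k + iκ)`. -/
theorem exp_decay_integral (κ : ℝ) (hκ : 0 < κ) (x : ℕ) :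
    (Real.exp (-(Real.log (κ + Real.sqrt (1 + κ ^ 2))) * x) : ℂ)
      = Complex.I * (Real.sqrt (1 + κ ^ 2) : ℝ) * (1 / (2 * Real.pi)) *
          ∫ k in (-Real.pi)..Real.pi,
            Complex.exp (-Complex.I * k * x) / (Complex.sin k + Complex.I * κ) := by
  have hπ : (0:ℝ) < π := Real.pi_pos
  set e := Real.sqrt (1+κ^2) with hedef
  have h1κ : (0:ℝ) < 1 + κ^2 := by positivity
  have he0 : 0 < e := Real.sqrt_pos.mpr h1κ
  have he2 : e^2 = 1+κ^2 := Real.sq_sqrt h1κ.le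
  have hκe : κ < e := by nlinarith
  have hb1 : e - κ < 1 := by nlinarith
  have hb0 : 0 < e - κ := by linarith
  set B : ℂ := ((e-κ:ℝ):ℂ) with hBdef
  have hBnorm : ‖B‖ < 1 := by
    rw [hBdef, Complex.norm_real, Real.norm_eq_abs, abs_of_pos hb0]; exact hb1
  have hB0 : B ≠ 0 := by
    rw [hBdef]; exact_mod_cast hb0.ne'
  have hnB : ‖-B‖ < 1 := by rwa [norm_neg]
  have hnB0 : -B ≠ 0 := neg_ne_zero.mpr hB0
  have hD : ∀ t : ℝ, Complex.sin t + I*κ ≠ 0 := hD_ne κ hκ.ne'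
  have heC : (e:ℂ) ≠ 0 := by exact_mod_cast he0.ne'
  have hπC : ((π:ℝ):ℂ) ≠ 0 := by exact_mod_cast hπ.ne'
  -- continuity / integrability
  have contD : ∀ c : ℂ, Continuous (fun t : ℝ => Complex.exp (-I*t*c)/(Complex.sin t + I*κ)) := by
    intro c
    apply Continuous.div
    · fun_prop
    · fun_prop
    · exact fun t => hD t
  have contw : ∀ (r : ℂ), ‖r‖ < 1 → ∀ n : ℕ,
      Continuous (fun t : ℝ => Complex.exp (-(I*t))^(n+1)/(1 - r*Complex.exp (-(I*t)))) := by
    intro r hr n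
    apply Continuous.div
    · fun_prop
    · fun_prop
    · exact fun t => one_sub_ne r _ hr (norm_w t)
  have contz : ∀ (r : ℂ), ‖r‖ < 1 → ∀ n : ℕ,
      Continuous (fun t : ℝ => Complex.exp (I*t)^(n+1)/(1 - r*Complex.exp (I*t))) := by
    intro r hr n
    apply Continuous.div
    · fun_prop
    · fun_prop
    · exact fun t => one_sub_ne r _ hr (norm_z t)
  have key : ∀ y : ℕ,
      (∫ k in (-π)..π, Complex.exp (-I*k*(y:ℂ))/(Complex.sin k + I*κ))
        = -(2*(π:ℂ)*I/(e:ℂ)) * B^y := by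
    intro y
    induction y with
    | zero =>
      have hbase : (∫ k in (-π)..π, Complex.exp (-I*k*((0:ℕ):ℂ))/(Complex.sin k + I*κ))
          = ∫ k in (-π)..π,
            ((-I*B/(e:ℂ)) * (Complex.exp (I*k)^(0+1)/(1 - B*Complex.exp (I*k)))
              + ((I*B/(e:ℂ)) * (Complex.exp (-(I*k))^(0+1)/(1 - (-B)*Complex.exp (-(I*k))))
              + (-(I/(e:ℂ))))) := by
        apply intervalIntegral.integral_congr
        intro t _
        simp only [Nat.cast_zero, mul_zero, Complex.exp_zero]
        exact ID1 κ e hκ he2 he0 t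
      rw [hbase]
      have i1 : IntervalIntegrable
          (fun k : ℝ => (-I*B/(e:ℂ)) * (Complex.exp (I*k)^(0+1)/(1 - B*Complex.exp (I*k))))
          volume (-π) π := (continuous_const.mul (contz B hBnorm 0)).intervalIntegrable _ _
      have i2 : IntervalIntegrable
          (fun k : ℝ => (I*B/(e:ℂ)) * (Complex.exp (-(I*k))^(0+1)/(1 - (-B)*Complex.exp (-(I*k)))))
          volume (-π) π := (continuous_const.mul (contw (-B) hnB 0)).intervalIntegrable _ _
      have i3 : IntervalIntegrable (fun _ : ℝ => -(I/(e:ℂ))) volume (-π) π :=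
        intervalIntegrable_const
      rw [intervalIntegral.integral_add i1 (i2.add i3), intervalIntegral.integral_add i2 i3,
        intervalIntegral.integral_const_mul, intervalIntegral.integral_const_mul,
        zero_int' B hBnorm hB0 0, zero_int (-B) hnB hnB0 0, intervalIntegral.integral_const]
      simp only [mul_zero, zero_add, pow_zero, mul_one, sub_neg_eq_add]
      rw [Complex.real_smul]
      push_cast
      field_simp
      ring
    | succ n ih =>
      have hstep : (∫ k in (-π)..π, Complex.exp (-I*k*((n+1:ℕ):ℂ))/(Complex.sin k + I*κ))
          = ∫ k in (-π)..π,
            (B * (Complex.exp (-I*k*(n:ℂ))/(Complex.sin k + I*κ))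
              + (-2*I*B) * (Complex.exp (-(I*k))^(n+1)/(1 - (-B)*Complex.exp (-(I*k))))) := by
        apply intervalIntegral.integral_congr
        intro t _
        have : ((n+1:ℕ):ℂ) = (n:ℂ)+1 := by push_cast; ring
        rw [this]
        exact ID2 κ e hκ he2 he0 n t
      rw [hstep]
      have i1 : IntervalIntegrable
          (fun k : ℝ => B * (Complex.exp (-I*k*(n:ℂ))/(Complex.sin k + I*κ)))
          volume (-π) π := (continuous_const.mul (contD (n:ℂ))).intervalIntegrable _ _
      have i2 : IntervalIntegrable
          (fun k : ℝ => (-2*I*B) * (Complex.exp (-(I*k))^(n+1)/(1 - (-B)*Complex.exp (-(I*k)))))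
          volume (-π) π := (continuous_const.mul (contw (-B) hnB n)).intervalIntegrable _ _
      rw [intervalIntegral.integral_add i1 i2, intervalIntegral.integral_const_mul,
        intervalIntegral.integral_const_mul, ih, zero_int (-B) hnB hnB0 n]
      ring
  rw [key x]
  have hprod : (κ+e)*(e-κ) = 1 := by nlinarith
  have hexp : Real.exp (-(Real.log (κ+e))*x) = (e-κ)^x := by
    have hlog : -Real.log (κ+e) = Real.log (e-κ) := by
      rw [← Real.log_inv]
      congr 1
      exact inv_eq_of_mul_eq_one_right hprod
    rw [hlog, mul_comm, Real.exp_nat_mul, Real.exp_log hb0]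
  rw [hexp, Complex.ofReal_pow, ← hBdef]
  field_simp
  ring_nf
  rw [Complex.I_sq]
  ring
end

section
/- Define for inverse temperatures 0 < β_L ≤ β_R < ∞ and coupling κ > 0 the rates Γ_α = -∫_{-π/2}^{π/2} (dk/2π) log[(1/4)(1 - tanh²((β_α/2) cos k))] for α ∈ {L,R}, and Γ_B = -∫_{-π/2}^{π/2} (dk/2π) log[(1/4)(1 - ((1-σ_B(k)) tanh((β_R/2) cos k) + σ_B(k) tanh((β_L/2) cos k))²)], where σ_B(k) = sin²k/(sin²k + κ²). If β_L < β_R, then 0 < Γ_L < Γ_B < Γ_R. -/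
open Real

private lemma my_continuous_tanh : Continuous Real.tanh := by
  have : Real.tanh = fun x => Real.sinh x / Real.cosh x := by
    funext x; exact Real.tanh_eq_sinh_div_cosh x
  rw [this]
  exact Real.continuous_sinh.div Real.continuous_cosh fun x => (Real.cosh_pos x).ne'

private lemma my_tanh_lt_one (x : ℝ) : Real.tanh x < 1 := by
  rw [Real.tanh_eq_sinh_div_cosh, div_lt_one (Real.cosh_pos x)]
  exact Real.sinh_lt_cosh x

private lemma my_neg_one_lt_tanh (x : ℝ) : -1 < Real.tanh x := by
  have := my_tanh_lt_one (-x)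
  rw [Real.tanh_neg] at this
  linarith

private lemma my_tanh_strictMono : StrictMono Real.tanh := by
  intro a b hab
  rw [Real.tanh_eq_sinh_div_cosh, Real.tanh_eq_sinh_div_cosh,
    div_lt_div_iff₀ (Real.cosh_pos a) (Real.cosh_pos b)]
  have h1 : 0 < Real.sinh (b - a) := Real.sinh_pos_iff.mpr (by linarith)
  rw [Real.sinh_sub] at h1
  linarith

private lemma my_log_aux {x y : ℝ} (hx : 0 ≤ x) (hxy : x < y) (hy : y < 1) :
    Real.log ((1 / 4) * (1 - y ^ 2)) < Real.log ((1 / 4) * (1 - x ^ 2)) :=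
  Real.log_lt_log (by nlinarith) (by nlinarith)

private lemma my_log_neg_aux {x : ℝ} (hx : x ^ 2 < 1) :
    Real.log ((1 / 4) * (1 - x ^ 2)) < 0 :=
  Real.log_neg (by nlinarith) (by nlinarith)

private lemma my_convex_lt_one {a b σ : ℝ} (ha : a < 1) (hb : b < 1) (h0 : 0 ≤ σ)
    (h1 : σ ≤ 1) : (1 - σ) * b + σ * a < 1 := by
  rcases eq_or_lt_of_le h0 with h | h
  · nlinarith
  · nlinarith [mul_lt_mul_of_pos_left ha h, mul_le_mul_of_nonneg_left hb.le (sub_nonneg.mpr h1)]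

private lemma my_sq_lt_one {x : ℝ} (h1 : -1 < x) (h2 : x < 1) : x ^ 2 < 1 := by nlinarith

/-- With `0 < β_L < β_R` and `κ > 0`, the decay rates
`Γ_α = -∫_{-π/2}^{π/2} (dk/2π) log[(1/4)(1 - tanh²((β_α/2)cos k))]` and
`Γ_B = -∫_{-π/2}^{π/2} (dk/2π) log[(1/4)(1 - ((1-σ_B)tanh((β_R/2)cos k) + σ_B tanh((β_L/2)cos k))²)]`,
with `σ_B(k) = sin²k/(sin²k+κ²)`, satisfy `0 < Γ_L < Γ_B < Γ_R`. -/
theorem rate_ordering (βL βR κ : ℝ) (h1 : 0 < βL) (h2 : βL < βR) (hκ : 0 < κ) :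
    let σB : ℝ → ℝ := fun k => Real.sin k ^ 2 / (Real.sin k ^ 2 + κ ^ 2)
    let Γ : ℝ → ℝ := fun β => -(1 / (2 * π)) *
      ∫ k in (-(π / 2))..(π / 2),
        Real.log ((1 / 4) * (1 - Real.tanh (β / 2 * Real.cos k) ^ 2))
    let ΓB : ℝ := -(1 / (2 * π)) *
      ∫ k in (-(π / 2))..(π / 2),
        Real.log ((1 / 4) * (1 - ((1 - σB k) * Real.tanh (βR / 2 * Real.cos k)
          + σB k * Real.tanh (βL / 2 * Real.cos k)) ^ 2))
    0 < Γ βL ∧ Γ βL < ΓB ∧ ΓB < Γ βR := by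
  intro σB Γ ΓB
  have hπ : (0 : ℝ) < π := Real.pi_pos
  have hc : (0 : ℝ) < 1 / (2 * π) := by positivity
  have hab : -(π / 2) < π / 2 := by linarith
  -- the mixed function
  obtain ⟨m, hm⟩ : ∃ m : ℝ → ℝ, m = fun k => (1 - σB k) * Real.tanh (βR / 2 * Real.cos k)
      + σB k * Real.tanh (βL / 2 * Real.cos k) := ⟨_, rfl⟩
  -- σB bounds
  have hσ0 : ∀ k, 0 ≤ σB k := fun k => div_nonneg (sq_nonneg _) (by positivity)
  have hσ1 : ∀ k, σB k ≤ 1 := fun k => by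
    rw [div_le_one (by positivity)]; nlinarith [sq_nonneg κ]
  -- m bounds
  have hm1 : ∀ k, m k < 1 := by
    intro k
    rw [hm]
    exact my_convex_lt_one (my_tanh_lt_one _) (my_tanh_lt_one _) (hσ0 k) (hσ1 k)
  have hm2 : ∀ k, -1 < m k := by
    intro k
    have := my_convex_lt_one (a := -Real.tanh (βL / 2 * Real.cos k))
      (b := -Real.tanh (βR / 2 * Real.cos k)) (σ := σB k)
      (by have := my_neg_one_lt_tanh (βL / 2 * Real.cos k); linarith)
      (by have := my_neg_one_lt_tanh (βR / 2 * Real.cos k); linarith) (hσ0 k) (hσ1 k)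
    rw [hm]
    nlinarith [this]
  -- continuity
  have htanhc : ∀ β : ℝ, Continuous fun k => Real.tanh (β / 2 * Real.cos k) :=
    fun β => my_continuous_tanh.comp (continuous_const.mul Real.continuous_cos)
  have hσc : Continuous σB := by
    apply Continuous.div
    · exact Real.continuous_sin.pow 2
    · exact (Real.continuous_sin.pow 2).add continuous_const
    · intro k; positivity
  have hmc : Continuous m := by
    rw [hm]
    exact ((continuous_const.sub hσc).mul (htanhc βR)).add (hσc.mul (htanhc βL))
  have hargc : ∀ β : ℝ, Continuous fun k =>
      Real.log ((1 / 4) * (1 - Real.tanh (β / 2 * Real.cos k) ^ 2)) := by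
    intro β
    apply Continuous.log
    · exact continuous_const.mul (continuous_const.sub ((htanhc β).pow 2))
    · intro k
      have h := my_sq_lt_one (my_neg_one_lt_tanh (β / 2 * Real.cos k)) (my_tanh_lt_one _)
      exact ne_of_gt (by linarith)
  have hBc : Continuous fun k => Real.log ((1 / 4) * (1 - m k ^ 2)) := by
    apply Continuous.log
    · exact continuous_const.mul (continuous_const.sub (hmc.pow 2))
    · intro k
      have h := my_sq_lt_one (hm2 k) (hm1 k)
      have : (0:ℝ) < (1 / 4) * (1 - m k ^ 2) := by nlinarith
      exact ne_of_gt this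
  -- pointwise in the open interval: key quantities
  have hkey : ∀ k ∈ Set.Ioo (-(π / 2)) (π / 2),
      0 ≤ Real.tanh (βL / 2 * Real.cos k) ∧
      Real.tanh (βL / 2 * Real.cos k) < Real.tanh (βR / 2 * Real.cos k) ∧
      Real.tanh (βR / 2 * Real.cos k) < 1 := by
    intro k hk
    have hcos : 0 < Real.cos k := Real.cos_pos_of_mem_Ioo hk
    refine ⟨?_, ?_, my_tanh_lt_one _⟩
    · have := my_tanh_strictMono.le_iff_le.mpr (show (0:ℝ) ≤ βL / 2 * Real.cos k by positivity)
      simpa [Real.tanh_zero] using this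
    · exact my_tanh_strictMono (by nlinarith)
  -- m between a and b
  have hmid : ∀ k ∈ Set.Ioo (-(π / 2)) (π / 2),
      Real.tanh (βL / 2 * Real.cos k) < m k ∧ m k ≤ Real.tanh (βR / 2 * Real.cos k) := by
    intro k hk
    obtain ⟨_, hab', _⟩ := hkey k hk
    have hσlt : σB k < 1 := by
      rw [div_lt_one (by positivity)]; nlinarith
    have h0 := hσ0 k
    constructor
    · rw [hm]; nlinarith
    · rw [hm]; nlinarith
  -- σB > 0 when sin k ≠ 0
  have hσpos : ∀ k : ℝ, Real.sin k ≠ 0 → 0 < σB k := by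
    intro k hs
    apply div_pos (by positivity) (by positivity)
  -- integrability
  have hiL : IntervalIntegrable (fun k =>
      Real.log ((1 / 4) * (1 - Real.tanh (βL / 2 * Real.cos k) ^ 2))) MeasureTheory.volume
      (-(π / 2)) (π / 2) := (hargc βL).intervalIntegrable _ _
  have hiR : IntervalIntegrable (fun k =>
      Real.log ((1 / 4) * (1 - Real.tanh (βR / 2 * Real.cos k) ^ 2))) MeasureTheory.volume
      (-(π / 2)) (π / 2) := (hargc βR).intervalIntegrable _ _
  have hiB : IntervalIntegrable (fun k =>
      Real.log ((1 / 4) * (1 - m k ^ 2))) MeasureTheory.volume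
      (-(π / 2)) (π / 2) := hBc.intervalIntegrable _ _
  -- Part 1 : 0 < Γ βL
  have part1 : 0 < Γ βL := by
    have hpos : 0 < ∫ k in (-(π / 2))..(π / 2),
        -Real.log ((1 / 4) * (1 - Real.tanh (βL / 2 * Real.cos k) ^ 2)) := by
      apply intervalIntegral.intervalIntegral_pos_of_pos (((hargc βL).neg).intervalIntegrable _ _) _ hab
      intro k
      have h1' := my_tanh_lt_one (βL / 2 * Real.cos k)
      have h2' := my_neg_one_lt_tanh (βL / 2 * Real.cos k)
      have := my_log_neg_aux (x := Real.tanh (βL / 2 * Real.cos k)) (by nlinarith)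
      show 0 < -Real.log ((1 / 4) * (1 - Real.tanh (βL / 2 * Real.cos k) ^ 2))
      linarith
    rw [intervalIntegral.integral_neg] at hpos
    have h' : 0 < (1 / (2 * π)) *
        (-∫ k in (-(π / 2))..(π / 2),
          Real.log ((1 / 4) * (1 - Real.tanh (βL / 2 * Real.cos k) ^ 2))) :=
      mul_pos hc (by linarith)
    show 0 < -(1 / (2 * π)) * _
    linarith [h']
  -- Part 2 : Γ βL < ΓB
  have part2 : Γ βL < ΓB := by
    have hpos : 0 < ∫ k in (-(π / 2))..(π / 2),
        (Real.log ((1 / 4) * (1 - Real.tanh (βL / 2 * Real.cos k) ^ 2))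
          - Real.log ((1 / 4) * (1 - m k ^ 2))) := by
      apply intervalIntegral.intervalIntegral_pos_of_pos_on (hiL.sub hiB) _ hab
      intro k hk
      obtain ⟨ha0, hab', hb1⟩ := hkey k hk
      obtain ⟨hlt, hle⟩ := hmid k hk
      have := my_log_aux ha0 hlt (lt_of_le_of_lt hle hb1)
      linarith
    rw [intervalIntegral.integral_sub hiL hiB] at hpos
    simp only [hm] at hpos
    show -(1 / (2 * π)) * _ < -(1 / (2 * π)) * _
    exact mul_lt_mul_of_neg_left (by linarith) (by linarith)
  -- Part 3 : ΓB < Γ βR  (split at 0 since the integrand difference vanishes at k = 0)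
  have part3 : ΓB < Γ βR := by
    set d : ℝ → ℝ := fun k => Real.log ((1 / 4) * (1 - m k ^ 2))
        - Real.log ((1 / 4) * (1 - Real.tanh (βR / 2 * Real.cos k) ^ 2)) with hd
    have hdc : Continuous d := hBc.sub (hargc βR)
    have hdpos : ∀ k ∈ Set.Ioo (-(π / 2)) (π / 2), Real.sin k ≠ 0 → 0 < d k := by
      intro k hk hs
      obtain ⟨ha0, hab', hb1⟩ := hkey k hk
      obtain ⟨hlt, _⟩ := hmid k hk
      have hσ := hσpos k hs
      have hmlt : m k < Real.tanh (βR / 2 * Real.cos k) := by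
        rw [hm]; nlinarith [hmid k hk]
      have hm0 : 0 ≤ m k := le_of_lt (lt_of_le_of_lt ha0 hlt)
      have := my_log_aux hm0 hmlt hb1
      simp only [hd]; linarith
    have hpos1 : 0 < ∫ k in (-(π / 2))..(0 : ℝ), d k := by
      apply intervalIntegral.intervalIntegral_pos_of_pos_on (hdc.intervalIntegrable _ _) _ (by linarith)
      intro k hk
      obtain ⟨hk1, hk2⟩ := hk
      refine hdpos k ⟨hk1, by linarith⟩ ?_
      exact ne_of_lt (Real.sin_neg_of_neg_of_neg_pi_lt hk2 (by linarith))
    have hpos2 : 0 < ∫ k in (0 : ℝ)..(π / 2), d k := by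
      apply intervalIntegral.intervalIntegral_pos_of_pos_on (hdc.intervalIntegrable _ _) _ (by linarith)
      intro k hk
      obtain ⟨hk1, hk2⟩ := hk
      refine hdpos k ⟨by linarith, hk2⟩ ?_
      exact ne_of_gt (Real.sin_pos_of_pos_of_lt_pi hk1 (by linarith))
    have hsplit : (∫ k in (-(π / 2))..(0 : ℝ), d k) + (∫ k in (0 : ℝ)..(π / 2), d k)
        = ∫ k in (-(π / 2))..(π / 2), d k :=
      intervalIntegral.integral_add_adjacent_intervals
        (hdc.intervalIntegrable _ _) (hdc.intervalIntegrable _ _)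
    have hpos : 0 < ∫ k in (-(π / 2))..(π / 2), d k := by
      rw [← hsplit]; linarith
    rw [hd, intervalIntegral.integral_sub hiB hiR] at hpos
    simp only [hm] at hpos
    show -(1 / (2 * π)) * _ < -(1 / (2 * π)) * _
    exact mul_lt_mul_of_neg_left (by linarith) (by linarith)
  exact ⟨part1, part2, part3⟩
end

section
/- Let κ > 0 and x ∈ ℤ. In momentum space L²(𝕋), the wave operators w_±(h, h_B) applied to the Kronecker delta δ_x give the functions (ŵ_±(h,h_B) e_x)(k) = e^{ikx} ∓ iκ e^{∓i|k||x|}/(sin|k| ± iκ), where e_x(k) = e^{ikx}. Equivalently, in energy space, for e ∈ (-1,1): w̃_±(h,h_B) δ̃_x(e) = (2π)^{-1/2}(1-e²)^{-1/4} ([(e+i√(1-e²))^x, (e-i√(1-e²))^x] ∓ iκ (e∓i√(1-e²))^{|x|}/(√(1-e²) ± iκ) [1,1]). -/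
open Real

lemma exp_I_mul_int (t : ℝ) (x : ℤ) :
    Complex.exp (Complex.I * t * x) = ((Real.cos t : ℂ) + Complex.I * Real.sin t) ^ x := by
  rw [show Complex.I * (t:ℂ) * (x:ℂ) = (x:ℂ) * ((t:ℂ) * Complex.I) by ring,
    Complex.exp_int_mul, Complex.exp_mul_I, ← Complex.ofReal_cos, ← Complex.ofReal_sin]
  ring_nf

lemma exp_neg_I_mul_nat (t : ℝ) (n : ℕ) :
    Complex.exp (-(Complex.I * t * n)) = ((Real.cos t : ℂ) - Complex.I * Real.sin t) ^ n := by
  rw [show -(Complex.I * (t:ℂ) * (n:ℂ)) = (n:ℂ) * (((-t : ℝ):ℂ) * Complex.I) by push_cast; ring,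
    Complex.exp_nat_mul, Complex.exp_mul_I, ← Complex.ofReal_cos, ← Complex.ofReal_sin,
    Real.cos_neg, Real.sin_neg]
  push_cast
  ring_nf

lemma exp_I_mul_nat (t : ℝ) (n : ℕ) :
    Complex.exp (Complex.I * t * n) = ((Real.cos t : ℂ) + Complex.I * Real.sin t) ^ n := by
  rw [show Complex.I * (t:ℂ) * (n:ℂ) = (n:ℂ) * ((t:ℝ) * Complex.I) by push_cast; ring,
    Complex.exp_nat_mul, Complex.exp_mul_I, ← Complex.ofReal_cos, ← Complex.ofReal_sin]
  ring_nf

/-- Equivalence of the momentum-space and energy-space expressions for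
the wave operators applied to `δ_x` (sign `σ = ±1`): with
`(ŵ_± e_x)(k) = e^{ikx} ∓ iκ e^{∓i|k||x|}/(sin|k| ± iκ)` and the energy-space map
`φ ↦ (2π)^{-1/2}(1-e²)^{-1/4}[φ(arccos e), φ(-arccos e)]`, one gets
`w̃_± δ̃_x(e) = (2π)^{-1/2}(1-e²)^{-1/4}([(e+i√(1-e²))^x, (e-i√(1-e²))^x]
∓ iκ (e∓i√(1-e²))^{|x|}/(√(1-e²) ± iκ) [1,1])` for `e ∈ (-1,1)`. -/
theorem wave_operator_energy_space (κ : ℝ) (hκ : 0 < κ) (σ : ℝ) (hσ : σ = 1 ∨ σ = -1)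
    (x : ℤ) (e : ℝ) (he : e ∈ Set.Ioo (-1 : ℝ) 1) :
    let w : ℝ → ℂ := fun k =>
      Complex.exp (Complex.I * k * x)
        - (σ : ℂ) * Complex.I * κ *
            Complex.exp (-(σ : ℂ) * Complex.I * |k| * (x.natAbs : ℝ)) /
          (Complex.sin (|k| : ℝ) + (σ : ℂ) * Complex.I * κ)
    let c : ℝ := (2 * π) ^ (-(1 / 2 : ℝ)) * (1 - e ^ 2) ^ (-(1 / 4 : ℝ))
    let s : ℝ := Real.sqrt (1 - e ^ 2)
    (c • w (Real.arccos e), c • w (-Real.arccos e))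
      = (c • (((e : ℂ) + Complex.I * s) ^ x
            - (σ : ℂ) * Complex.I * κ * ((e : ℂ) - (σ : ℂ) * Complex.I * s) ^ x.natAbs
              / ((s : ℂ) + (σ : ℂ) * Complex.I * κ)),
         c • (((e : ℂ) - Complex.I * s) ^ x
            - (σ : ℂ) * Complex.I * κ * ((e : ℂ) - (σ : ℂ) * Complex.I * s) ^ x.natAbs
              / ((s : ℂ) + (σ : ℂ) * Complex.I * κ))) := by
  intro w c s
  obtain ⟨h1, h2⟩ := he
  have hθ : |Real.arccos e| = Real.arccos e := abs_of_nonneg (Real.arccos_nonneg e)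
  have hcos : Real.cos (Real.arccos e) = e := Real.cos_arccos h1.le h2.le
  have hsin : Real.sin (Real.arccos e) = s := Real.sin_arccos e
  set θ := Real.arccos e with hθdef
  have hsinC : Complex.sin (θ : ℂ) = (s : ℂ) := by
    rw [← Complex.ofReal_sin, hsin]
  have eA : Complex.exp (Complex.I * θ * x) = ((e : ℂ) + Complex.I * s) ^ x := by
    rw [exp_I_mul_int, hcos, hsin]
  have eB : Complex.exp (Complex.I * (-θ : ℝ) * x) = ((e : ℂ) - Complex.I * s) ^ x := by
    rw [exp_I_mul_int, Real.cos_neg, Real.sin_neg, hcos, hsin]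
    push_cast; ring_nf
  have eC : Complex.exp (-(Complex.I * θ * ((x.natAbs : ℝ) : ℂ)))
      = ((e : ℂ) - Complex.I * s) ^ x.natAbs := by
    rw [show ((x.natAbs : ℝ) : ℂ) = ((x.natAbs : ℕ) : ℂ) by push_cast; ring,
      exp_neg_I_mul_nat, hcos, hsin]
  have eD : Complex.exp (Complex.I * θ * ((x.natAbs : ℝ) : ℂ))
      = ((e : ℂ) + Complex.I * s) ^ x.natAbs := by
    rw [show ((x.natAbs : ℝ) : ℂ) = ((x.natAbs : ℕ) : ℂ) by push_cast; ring,
      exp_I_mul_nat, hcos, hsin]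
  simp only [w, abs_neg, hθ]
  rw [Prod.mk.injEq]
  rcases hσ with rfl | rfl
  · constructor
    · congr 1
      rw [show -((1:ℝ):ℂ) * Complex.I * (θ:ℂ) * ((x.natAbs : ℝ):ℂ)
          = -(Complex.I * θ * ((x.natAbs : ℝ):ℂ)) by push_cast; ring,
        eA, eC, hsinC]
      push_cast; ring
    · congr 1
      rw [show -((1:ℝ):ℂ) * Complex.I * (θ:ℂ) * ((x.natAbs : ℝ):ℂ)
          = -(Complex.I * θ * ((x.natAbs : ℝ):ℂ)) by push_cast; ring,
        eB, eC, hsinC]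
      push_cast; ring
  · constructor
    · congr 1
      rw [show -(((-1:ℝ)):ℂ) * Complex.I * (θ:ℂ) * ((x.natAbs : ℝ):ℂ)
          = Complex.I * θ * ((x.natAbs : ℝ):ℂ) by push_cast; ring,
        eA, eD, hsinC]
      push_cast; ring
    · congr 1
      rw [show -(((-1:ℝ)):ℂ) * Complex.I * (θ:ℂ) * ((x.natAbs : ℝ):ℂ)
          = Complex.I * θ * ((x.natAbs : ℝ):ℂ) by push_cast; ring,
        eB, eD, hsinC]
      push_cast; ring
end
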